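/- Let N ≥ 2, let w₁, …, w_N be nonnegative reals summing to 1 with w₁ + w₂ ≥ 1/2, let U₁ = I, let U₂ be a diagonal 2×2 unitary matrix, and let U₃, …, U_N be arbitrary 2×2 unitary matrices. Then for the density matrix ρ = [[1,0],[0,0]], the scheme E(ρ) = Σₖ wₖ Uₖ ρ Uₖ† satisfies ‖E(ρ) − (1/2)I‖_∞ ≥ w₁ + w₂ − 1/2. That is, the state |z+⟩ is encrypted no better than with approximation parameter w₁ + w₂ − 1/2, matching the worst case of the Pauli scheme. -/

import Mathlib

open Matrix
open scoped ComplexOrder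

noncomputable section

/-- The operator norm of a matrix, i.e. the norm of the induced operator on Euclidean space;
for a Hermitian matrix this is the maximum of the absolute values of its eigenvalues. -/
def opNorm {m : Type*} [Fintype m] [DecidableEq m] (A : Matrix m m ℂ) : ℝ :=
  ‖Matrix.toEuclideanCLM (𝕜 := ℂ) A‖

lemma abs_entry_le_opNorm {m : Type*} [Fintype m] [DecidableEq m]
    (A : Matrix m m ℂ) (i j : m) : ‖A i j‖ ≤ opNorm A := by
  set x : EuclideanSpace ℂ m := (WithLp.equiv 2 (m → ℂ)).symm (Pi.single j 1) with hxdef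
  have hx : ‖x‖ = 1 := by
    simpa [hxdef] using EuclideanSpace.norm_single (𝕜 := ℂ) j 1
  set y := Matrix.toEuclideanCLM (𝕜 := ℂ) A x with hy
  have hval : y i = A i j := by
    rw [hy, hxdef, WithLp.equiv_symm_apply, Matrix.toEuclideanCLM_toLp]
    simp [Matrix.mulVec_single]
  have h1 : ‖A i j‖ ≤ ‖y‖ := by
    have := norm_inner_le_norm (𝕜 := ℂ) (EuclideanSpace.single i (1:ℂ)) y
    rw [EuclideanSpace.inner_single_left] at this
    simpa [hval] using this
  have h2 : ‖y‖ ≤ ‖Matrix.toEuclideanCLM (𝕜 := ℂ) A‖ := by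
    have h := (Matrix.toEuclideanCLM (𝕜 := ℂ) A).le_opNorm x
    rwa [hx, mul_one] at h
  exact h1.trans h2

lemma conj_entry (U : Matrix (Fin 2) (Fin 2) ℂ) :
    (U * (!![1,0;0,0] : Matrix (Fin 2) (Fin 2) ℂ) * Uᴴ) 0 0
      = (Complex.normSq (U 0 0) : ℂ) := by
  simp [Matrix.mul_apply, Fin.sum_univ_two, conjTranspose_apply,
    Complex.normSq_eq_conj_mul_self]
  ring

lemma diag_unitary_normSq (U : Matrix (Fin 2) (Fin 2) ℂ)
    (hU : U ∈ Matrix.unitaryGroup (Fin 2) ℂ) (hd : U.IsDiag) :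
    Complex.normSq (U 0 0) = 1 := by
  have h : Uᴴ * U = 1 := hU.1
  have h00 : (Uᴴ * U) 0 0 = 1 := by rw [h]; simp
  rw [Matrix.mul_apply, Fin.sum_univ_two] at h00
  have h10 : U 1 0 = 0 := hd (by decide)
  simp [conjTranspose_apply, h10, ← Complex.normSq_eq_conj_mul_self] at h00
  exact_mod_cast h00

/-- If `U₁ = I`, `U₂` is diagonal, and `w₁ + w₂ ≥ 1/2`, then the state
`|z+⟩⟨z+| = [[1,0],[0,0]]` is encrypted by `E(ρ) = Σₖ wₖ Uₖ ρ Uₖ†` no better than with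
operator-norm error `w₁ + w₂ − 1/2`, matching the worst case of the Pauli scheme. -/
theorem z_state_encrypted_no_better (N : ℕ) (hN : 2 ≤ N)
    (w : Fin N → ℝ) (hw : ∀ k, 0 ≤ w k) (hsum : ∑ k, w k = 1)
    (htop : 1/2 ≤ w ⟨0, by omega⟩ + w ⟨1, by omega⟩)
    (U : Fin N → Matrix (Fin 2) (Fin 2) ℂ)
    (hU : ∀ k, U k ∈ Matrix.unitaryGroup (Fin 2) ℂ)
    (hU0 : U ⟨0, by omega⟩ = 1) (hU1 : (U ⟨1, by omega⟩).IsDiag) :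
    w ⟨0, by omega⟩ + w ⟨1, by omega⟩ - 1/2
      ≤ opNorm ((∑ k, w k • (U k * !![1,0;0,0] * (U k)ᴴ))
          - (1/2 : ℝ) • (1 : Matrix (Fin 2) (Fin 2) ℂ)) := by
  set i0 : Fin N := ⟨0, by omega⟩
  set i1 : Fin N := ⟨1, by omega⟩
  set A : Matrix (Fin 2) (Fin 2) ℂ :=
    (∑ k, w k • (U k * !![1,0;0,0] * (U k)ᴴ)) - (1/2 : ℝ) • (1 : Matrix (Fin 2) (Fin 2) ℂ)
    with hA
  set r : ℝ := (∑ k, w k * Complex.normSq (U k 0 0)) - 1/2 with hr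
  have hentry : A 0 0 = (r : ℂ) := by
    rw [hA, hr]
    simp only [Matrix.sub_apply, Matrix.sum_apply, Matrix.smul_apply, conj_entry,
      Matrix.one_apply_eq, Complex.ofReal_sub, Complex.ofReal_sum]
    push_cast
    simp [Complex.real_smul]
  have hrge : w i0 + w i1 - 1/2 ≤ r := by
    rw [hr]
    have hsub : ({i0, i1} : Finset (Fin N)) ⊆ Finset.univ := Finset.subset_univ _
    have hne : i0 ≠ i1 := by simp [i0, i1, Fin.ext_iff]
    have hbound : ∑ k ∈ ({i0, i1} : Finset (Fin N)), w k * Complex.normSq (U k 0 0)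
        ≤ ∑ k, w k * Complex.normSq (U k 0 0) := by
      apply Finset.sum_le_sum_of_subset_of_nonneg hsub
      intro k _ _
      exact mul_nonneg (hw k) (Complex.normSq_nonneg _)
    rw [Finset.sum_pair hne] at hbound
    have h0 : Complex.normSq (U i0 0 0) = 1 := by rw [hU0]; simp
    have h1 : Complex.normSq (U i1 0 0) = 1 := diag_unitary_normSq _ (hU i1) hU1
    rw [h0, h1] at hbound
    linarith
  have habs : ‖A 0 0‖ ≤ opNorm A := abs_entry_le_opNorm A 0 0
  rw [hentry, Complex.norm_real, Real.norm_eq_abs] at habs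
  exact hrge.trans ((le_abs_self r).trans habs)

end
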